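/- arXiv:2303.03751 — 3 statements merged into one kernel-verified Lean document; each statement's English description precedes it below -/
import Mathlib

section
/- Let f: R^d → R be a quadratic function with Hessian cI_d for constant c, μ > 0, x ∈ R^d. Let ξ1, ξ2 be independent standard Gaussians in R^d and S = sign(f(x+μξ1) - f(x+μξ2)). Then ‖E[S·(ξ1 - ξ2)]‖² ≤ 32/π, a bound independent of the dimension d. -/
open MeasureTheory ProbabilityTheory Real
open scoped ENNReal NNReal

lemma pdf_eq (x : ℝ) : gaussianPDFReal 0 1 x = (√(2 * π))⁻¹ * rexp (-(x^2/2)) := by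
  simp only [gaussianPDFReal, NNReal.coe_one, mul_one, sub_zero]; ring_nf

lemma key_pt (x : ℝ) : x^2 * gaussianPDFReal 0 1 x ≤ rexp (-(x^2/4)) := by
  rw [pdf_eq]
  have h6 : (4:ℝ) ≤ 2 * π := by nlinarith [pi_gt_three]
  have hs : (2:ℝ) ≤ √(2 * π) := by
    calc (2:ℝ) = √4 := by rw [show (4:ℝ) = 2^2 by norm_num, Real.sqrt_sq (by norm_num : (0:ℝ) ≤ 2)]
      _ ≤ √(2*π) := Real.sqrt_le_sqrt h6
  have hinv : (√(2 * π))⁻¹ ≤ 1/2 := by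
    rw [inv_le_comm₀ (by positivity) (by norm_num)]
    linarith
  have h2 : x^2 * rexp (-(x^2/4)) ≤ 2 := by
    have hu := Real.add_one_le_exp (x^2/4 - 1)
    have he : rexp (x^2/4 - 1) = rexp (x^2/4) * rexp (-1) := by
      rw [← Real.exp_add]; ring_nf
    have hexp1 : rexp (-1) ≤ 1/2 := by
      rw [Real.exp_neg]
      rw [inv_le_comm₀ (Real.exp_pos 1) (by norm_num)]
      linarith [Real.add_one_le_exp (1:ℝ)]
    have hpos := Real.exp_pos (-(x^2/4))
    have : rexp (-(x^2/4)) * rexp (x^2/4) = 1 := by rw [← Real.exp_add]; simp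
    nlinarith [Real.exp_pos (x^2/4), sq_nonneg x]
  have hsplit : rexp (-(x^2/2)) = rexp (-(x^2/4)) * rexp (-(x^2/4)) := by
    rw [← Real.exp_add]; ring_nf
  have hnn : (0:ℝ) ≤ rexp (-(x^2/4)) := (Real.exp_pos _).le
  calc x^2 * ((√(2 * π))⁻¹ * rexp (-(x^2/2)))
      = (√(2*π))⁻¹ * ((x^2 * rexp (-(x^2/4))) * rexp (-(x^2/4))) := by rw [hsplit]; ring
    _ ≤ (1/2) * (2 * rexp (-(x^2/4))) := by
        apply mul_le_mul hinv ?_ (by positivity) (by norm_num)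
        exact mul_le_mul_of_nonneg_right h2 hnn
    _ = rexp (-(x^2/4)) := by ring

-- transfer lemma
lemma gauss_integral_eq (g : ℝ → ℝ) :
    ∫ x, g x ∂(gaussianReal 0 1) = ∫ x, gaussianPDFReal 0 1 x * g x := by
  rw [gaussianReal_of_var_ne_zero 0 one_ne_zero]
  have : (gaussianPDF 0 1) = fun x => ((gaussianPDFReal 0 1 x).toNNReal : ℝ≥0∞) := rfl
  rw [this]
  rw [integral_withDensity_eq_integral_smul
    ((measurable_gaussianPDFReal 0 1).real_toNNReal) g]
  congr 1; ext x
  simp [NNReal.smul_def, Real.coe_toNNReal _ (gaussianPDFReal_nonneg 0 1 x)]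

lemma gauss_integrable_iff (g : ℝ → ℝ) (hg : Measurable g) :
    Integrable g (gaussianReal 0 1) ↔ Integrable (fun x => g x * gaussianPDFReal 0 1 x) := by
  rw [gaussianReal_of_var_ne_zero 0 one_ne_zero]
  rw [integrable_withDensity_iff (measurable_gaussianPDF 0 1)
    (ae_of_all _ fun x => ENNReal.ofReal_lt_top)]
  constructor <;> intro h <;> apply h.congr <;> exact ae_of_all _ fun x => by
    simp [gaussianPDF, ENNReal.toReal_ofReal (gaussianPDFReal_nonneg 0 1 x)]

lemma int_exp4 : Integrable (fun x : ℝ => rexp (-(x^2/4))) := by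
  have := integrable_exp_neg_mul_sq (by norm_num : (0:ℝ) < 1/4)
  apply this.congr
  exact ae_of_all _ fun x => by ring_nf

lemma intval_exp4 : ∫ x : ℝ, rexp (-(x^2/4)) ≤ 4 := by
  have h : ∫ x : ℝ, rexp (-(1/4) * x^2) = √(π / (1/4)) := integral_gaussian (1/4)
  have he : ∫ x : ℝ, rexp (-(x^2/4)) = √(π / (1/4)) := by
    rw [← h]; congr 1; ext x; ring_nf
  rw [he]
  calc √(π / (1/4)) ≤ √16 := Real.sqrt_le_sqrt (by nlinarith [pi_le_four])
    _ = 4 := by rw [show (16:ℝ) = 4^2 by norm_num, Real.sqrt_sq (by norm_num : (0:ℝ) ≤ 4)]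

lemma gauss_int_sq : Integrable (fun x : ℝ => x^2) (gaussianReal 0 1) := by
  rw [gauss_integrable_iff _ (by fun_prop)]
  apply Integrable.mono' int_exp4
  · exact ((measurable_id.pow_const 2).mul (measurable_gaussianPDFReal 0 1)).aestronglyMeasurable
  · exact ae_of_all _ fun x => by
      rw [Real.norm_eq_abs, abs_of_nonneg (mul_nonneg (sq_nonneg x) (gaussianPDFReal_nonneg 0 1 x))]
      exact key_pt x

lemma gauss_sq_le : ∫ x, x^2 ∂(gaussianReal 0 1) ≤ 4 := by
  rw [gauss_integral_eq]
  calc ∫ x, gaussianPDFReal 0 1 x * x^2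
      ≤ ∫ x : ℝ, rexp (-(x^2/4)) := by
        apply integral_mono ?_ int_exp4 fun x => by
          rw [mul_comm]; exact key_pt x
        have := gauss_int_sq
        rw [gauss_integrable_iff _ (by fun_prop)] at this
        exact this.congr (ae_of_all _ fun x => by ring)
    _ ≤ 4 := intval_exp4

lemma gauss_int_id : Integrable (fun x : ℝ => x) (gaussianReal 0 1) := by
  apply Integrable.mono' ((integrable_const 1).add gauss_int_sq)
  · exact measurable_id.aestronglyMeasurable
  · exact ae_of_all _ fun x => by
      rw [Real.norm_eq_abs]
      simp only [Pi.add_apply]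
      nlinarith [abs_nonneg x, sq_abs x, sq_nonneg (|x| - 1)]

noncomputable def gMS : MeasureSpace ℝ := ⟨gaussianReal 0 1⟩

section B
attribute [local instance 2000] gMS
local instance : SigmaFinite (volume : Measure ℝ) :=
  inferInstanceAs (SigmaFinite (gaussianReal 0 1))

variable {d : ℕ}

lemma pi_prod_integrable (g : Fin d → ℝ → ℝ) (hg : ∀ k, Integrable (g k) (gaussianReal 0 1)) :
    Integrable (fun q : Fin d → ℝ => ∏ k, g k (q k)) (Measure.pi fun _ => gaussianReal 0 1) := by
  rw [show (Measure.pi fun _ : Fin d => gaussianReal 0 1) = (volume : Measure (Fin d → ℝ))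
    from (volume_pi ..).symm]
  exact Integrable.fintype_prod hg

lemma pi_prod_integral (g : Fin d → ℝ → ℝ) :
    ∫ q : Fin d → ℝ, ∏ k, g k (q k) ∂(Measure.pi fun _ => gaussianReal 0 1)
      = ∏ k, ∫ x, g k x ∂(gaussianReal 0 1) := by
  rw [show (Measure.pi fun _ : Fin d => gaussianReal 0 1) = (volume : Measure (Fin d → ℝ))
    from (volume_pi ..).symm]
  exact integral_fintype_prod_eq_prod (μ := fun _ => gaussianReal 0 1) g

lemma P1 (i : Fin d) :
    Integrable (fun q : Fin d → ℝ => q i) (Measure.pi fun _ => gaussianReal 0 1) ∧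
    ∫ q : Fin d → ℝ, q i ∂(Measure.pi fun _ => gaussianReal 0 1) = ∫ x, x ∂(gaussianReal 0 1) := by
  have hfun : (fun q : Fin d → ℝ => q i) = fun q => ∏ k, (if k = i then q k else 1) := by
    ext q; rw [Finset.prod_ite_eq' Finset.univ i (fun k => q k)]; simp
  have hg : ∀ k : Fin d, Integrable (fun x : ℝ => if k = i then x else 1) (gaussianReal 0 1) := by
    intro k; by_cases h : k = i <;> simp [h, gauss_int_id, integrable_const]
  constructor
  · rw [hfun]; exact pi_prod_integrable _ hg
  · rw [hfun, pi_prod_integral (fun k x => if k = i then x else 1)]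
    have : ∀ k : Fin d, (∫ x : ℝ, (if k = i then x else 1) ∂(gaussianReal 0 1))
        = if k = i then ∫ x : ℝ, x ∂(gaussianReal 0 1) else 1 := by
      intro k; by_cases h : k = i <;> simp [h]
    rw [Finset.prod_congr rfl fun k _ => this k, Finset.prod_ite_eq' Finset.univ i]
    simp

lemma P2 (i : Fin d) :
    Integrable (fun q : Fin d → ℝ => (q i)^2) (Measure.pi fun _ => gaussianReal 0 1) ∧
    ∫ q : Fin d → ℝ, (q i)^2 ∂(Measure.pi fun _ => gaussianReal 0 1)
      = ∫ x, x^2 ∂(gaussianReal 0 1) := by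
  have hfun : (fun q : Fin d → ℝ => (q i)^2) = fun q => ∏ k, (if k = i then (q k)^2 else 1) := by
    ext q; rw [Finset.prod_ite_eq' Finset.univ i (fun k => (q k)^2)]; simp
  have hg : ∀ k : Fin d, Integrable (fun x : ℝ => if k = i then x^2 else 1) (gaussianReal 0 1) := by
    intro k; by_cases h : k = i <;> simp [h, gauss_int_sq, integrable_const]
  constructor
  · rw [hfun]; exact pi_prod_integrable _ hg
  · rw [hfun, pi_prod_integral (fun k x => if k = i then x^2 else 1)]
    have : ∀ k : Fin d, (∫ x : ℝ, (if k = i then x^2 else 1) ∂(gaussianReal 0 1))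
        = if k = i then ∫ x : ℝ, x^2 ∂(gaussianReal 0 1) else 1 := by
      intro k; by_cases h : k = i <;> simp [h]
    rw [Finset.prod_congr rfl fun k _ => this k, Finset.prod_ite_eq' Finset.univ i]
    simp

lemma P3 {i j : Fin d} (hij : i ≠ j) :
    Integrable (fun q : Fin d → ℝ => q i * q j) (Measure.pi fun _ => gaussianReal 0 1) ∧
    ∫ q : Fin d → ℝ, q i * q j ∂(Measure.pi fun _ => gaussianReal 0 1)
      = (∫ x, x ∂(gaussianReal 0 1)) * (∫ x, x ∂(gaussianReal 0 1)) := by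
  have hfun : (fun q : Fin d → ℝ => q i * q j)
      = fun q => ∏ k, ((if k = i then q k else 1) * (if k = j then q k else 1)) := by
    ext q
    rw [Finset.prod_mul_distrib, Finset.prod_ite_eq' Finset.univ i (fun k => q k),
      Finset.prod_ite_eq' Finset.univ j (fun k => q k)]
    simp
  have hg : ∀ k : Fin d, Integrable
      (fun x : ℝ => (if k = i then x else 1) * (if k = j then x else 1)) (gaussianReal 0 1) := by
    intro k
    by_cases h : k = i
    · simpa [h, hij] using gauss_int_id
    · by_cases h' : k = j
      · simpa [h, h', hij.symm] using gauss_int_id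
      · simpa [h, h'] using integrable_const (1:ℝ)
  constructor
  · rw [hfun]; exact pi_prod_integrable _ hg
  · rw [hfun, pi_prod_integral (fun k x => (if k = i then x else 1) * (if k = j then x else 1))]
    have : ∀ k : Fin d, (∫ x : ℝ, ((if k = i then x else 1) * (if k = j then x else 1))
          ∂(gaussianReal 0 1))
        = (if k = i then ∫ x : ℝ, x ∂(gaussianReal 0 1) else 1)
          * (if k = j then ∫ x : ℝ, x ∂(gaussianReal 0 1) else 1) := by
      intro k
      by_cases h : k = i
      · simp [h, hij]
      · by_cases h' : k = j <;> simp [h, h', hij.symm]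
    rw [Finset.prod_congr rfl fun k _ => this k, Finset.prod_mul_distrib,
      Finset.prod_ite_eq' Finset.univ i, Finset.prod_ite_eq' Finset.univ j]
    simp
end B

section C
variable {d : ℕ}

noncomputable def mu1 : ℝ := ∫ x, x ∂(gaussianReal 0 1)
noncomputable def m2v : ℝ := ∫ x, x^2 ∂(gaussianReal 0 1)

lemma Q (i j : Fin d) :
    Integrable (fun p : (Fin d → ℝ) × (Fin d → ℝ) => (p.1 i - p.2 i) * (p.1 j - p.2 j))
      ((Measure.pi fun _ : Fin d => gaussianReal 0 1).prod
        (Measure.pi fun _ : Fin d => gaussianReal 0 1)) ∧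
    ∫ p : (Fin d → ℝ) × (Fin d → ℝ), (p.1 i - p.2 i) * (p.1 j - p.2 j)
      ∂((Measure.pi fun _ : Fin d => gaussianReal 0 1).prod
        (Measure.pi fun _ : Fin d => gaussianReal 0 1))
    = if i = j then 2 * (m2v - mu1^2) else 0 := by
  set Pi := Measure.pi fun _ : Fin d => gaussianReal 0 1 with hPi
  have hprob : IsProbabilityMeasure Pi := by infer_instance
  -- F q = q i * q j  (with value vF)
  obtain ⟨hF, hFval⟩ : Integrable (fun q : Fin d → ℝ => q i * q j) Pi ∧
      ∫ q, q i * q j ∂Pi = (if i = j then m2v else mu1^2) := by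
    by_cases h : i = j
    · subst h
      refine ⟨(P2 i).1.congr (ae_of_all _ fun q => by simp [sq]), ?_⟩
      rw [if_pos rfl]
      rw [show (fun q : Fin d → ℝ => q i * q i) = fun q => (q i)^2 from funext fun q => (sq (q i)).symm]
      exact (P2 i).2
    · refine ⟨(P3 h).1, ?_⟩
      rw [(P3 h).2, if_neg h, sq, mu1]
  have h1 : Integrable (fun p : (Fin d → ℝ) × (Fin d → ℝ) => p.1 i * p.1 j) (Pi.prod Pi) := by
    have := hF.mul_prod (integrable_const (1:ℝ)) (ν := Pi)
    exact this.congr (ae_of_all _ fun p => by simp)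
  have h1v : ∫ p : (Fin d → ℝ) × (Fin d → ℝ), p.1 i * p.1 j ∂(Pi.prod Pi)
      = (if i = j then m2v else mu1^2) := by
    rw [← hFval]
    have := integral_prod_mul (μ := Pi) (ν := Pi) (fun q : Fin d → ℝ => q i * q j)
      (fun _ => (1:ℝ))
    simpa using this
  have h4 : Integrable (fun p : (Fin d → ℝ) × (Fin d → ℝ) => p.2 i * p.2 j) (Pi.prod Pi) := by
    have := (integrable_const (1:ℝ)).mul_prod hF (μ := Pi)
    exact this.congr (ae_of_all _ fun p => by simp)
  have h4v : ∫ p : (Fin d → ℝ) × (Fin d → ℝ), p.2 i * p.2 j ∂(Pi.prod Pi)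
      = (if i = j then m2v else mu1^2) := by
    rw [← hFval]
    have := integral_prod_mul (μ := Pi) (ν := Pi) (fun _ => (1:ℝ))
      (fun q : Fin d → ℝ => q i * q j)
    simpa using this
  have h2 : Integrable (fun p : (Fin d → ℝ) × (Fin d → ℝ) => p.1 i * p.2 j) (Pi.prod Pi) :=
    (P1 i).1.mul_prod (P1 j).1
  have h2v : ∫ p : (Fin d → ℝ) × (Fin d → ℝ), p.1 i * p.2 j ∂(Pi.prod Pi) = mu1 * mu1 := by
    have := integral_prod_mul (μ := Pi) (ν := Pi) (fun q : Fin d → ℝ => q i)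
      (fun q : Fin d → ℝ => q j)
    rw [this, (P1 i).2, (P1 j).2]; rfl
  have h3 : Integrable (fun p : (Fin d → ℝ) × (Fin d → ℝ) => p.2 i * p.1 j) (Pi.prod Pi) := by
    have := (P1 j).1.mul_prod (P1 i).1 (μ := Pi) (ν := Pi)
    exact this.congr (ae_of_all _ fun p => by ring_nf)
  have h3v : ∫ p : (Fin d → ℝ) × (Fin d → ℝ), p.2 i * p.1 j ∂(Pi.prod Pi) = mu1 * mu1 := by
    have := integral_prod_mul (μ := Pi) (ν := Pi) (fun q : Fin d → ℝ => q j)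
      (fun q : Fin d → ℝ => q i)
    rw [show (fun p : (Fin d → ℝ) × (Fin d → ℝ) => p.2 i * p.1 j)
      = fun p : (Fin d → ℝ) × (Fin d → ℝ) => p.1 j * p.2 i from funext fun p => by ring]
    rw [this, (P1 j).2, (P1 i).2]; rfl
  have hfun : (fun p : (Fin d → ℝ) × (Fin d → ℝ) => (p.1 i - p.2 i) * (p.1 j - p.2 j))
      = fun p => p.1 i * p.1 j - p.1 i * p.2 j - p.2 i * p.1 j + p.2 i * p.2 j :=
    funext fun p => by ring
  have h12 : Integrable (fun p : (Fin d → ℝ) × (Fin d → ℝ) =>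
      p.1 i * p.1 j - p.1 i * p.2 j) (Pi.prod Pi) := h1.sub h2
  have h123 : Integrable (fun p : (Fin d → ℝ) × (Fin d → ℝ) =>
      p.1 i * p.1 j - p.1 i * p.2 j - p.2 i * p.1 j) (Pi.prod Pi) := h12.sub h3
  constructor
  · rw [hfun]; exact h123.add h4
  · rw [hfun]
    rw [integral_add h123 h4, integral_sub h12 h3, integral_sub h1 h2, h1v, h2v, h3v, h4v]
    by_cases h : i = j <;> simp [h] <;> ring
end C

/-- For a quadratic function `f` with Hessian `c·I_d` (so that
`f(y) = f(x) + ⟨∇f(x), y-x⟩ + (c/2)‖y-x‖²`), `μ > 0`, and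
`S = sign(f(x+μξ1) - f(x+μξ2))` with `ξ1, ξ2` independent standard Gaussians,
`‖E[S·(ξ1-ξ2)]‖² ≤ 32/π`, independently of the dimension `d`. -/
theorem quadratic_sign_mean_bound (d : ℕ) (f : (Fin d → ℝ) → ℝ)
    (x gv : Fin d → ℝ) (c μ : ℝ) (hμ : 0 < μ)
    (hf : ∀ y : Fin d → ℝ,
      f y = f x + (∑ i : Fin d, gv i * (y i - x i))
              + c / 2 * ∑ i : Fin d, (y i - x i) ^ 2) :
    ∑ i : Fin d, (∫ p : (Fin d → ℝ) × (Fin d → ℝ),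
        (if 0 ≤ f (x + μ • p.1) - f (x + μ • p.2) then (1 : ℝ) else -1) *
          (p.1 i - p.2 i)
        ∂((Measure.pi fun _ : Fin d => gaussianReal 0 1).prod
            (Measure.pi fun _ : Fin d => gaussianReal 0 1))) ^ 2
      ≤ 32 / Real.pi := by
  set Pm := Measure.pi fun _ : Fin d => gaussianReal 0 1 with hPm
  set M := Pm.prod Pm with hM
  have hprob : IsProbabilityMeasure M := by infer_instance
  set S : (Fin d → ℝ) × (Fin d → ℝ) → ℝ :=
    fun p => if 0 ≤ f (x + μ • p.1) - f (x + μ • p.2) then (1 : ℝ) else -1 with hS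
  set B : Fin d → (Fin d → ℝ) × (Fin d → ℝ) → ℝ := fun i p => p.1 i - p.2 i with hB
  -- rewrite f-difference as an explicit measurable function
  set G : (Fin d → ℝ) × (Fin d → ℝ) → ℝ := fun p =>
    ((∑ i : Fin d, gv i * (μ * p.1 i)) + c / 2 * ∑ i : Fin d, (μ * p.1 i) ^ 2)
      - ((∑ i : Fin d, gv i * (μ * p.2 i)) + c / 2 * ∑ i : Fin d, (μ * p.2 i) ^ 2) with hG
  have hGeq : ∀ p : (Fin d → ℝ) × (Fin d → ℝ),
      f (x + μ • p.1) - f (x + μ • p.2) = G p := by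
    intro p
    have key : ∀ (q : Fin d → ℝ) (i : Fin d), (x + μ • q) i - x i = μ * q i := by
      intro q i; simp [mul_comm]
    rw [hf (x + μ • p.1), hf (x + μ • p.2)]
    simp_rw [key]
    rw [hG]
    ring
  have hGmeas : Measurable G := by fun_prop
  have hSmeas : Measurable S := by
    have : S = fun p => if 0 ≤ G p then (1:ℝ) else -1 := by
      funext p; rw [hS]; simp only [hGeq p]
    rw [this]
    exact Measurable.ite (measurableSet_le measurable_const hGmeas)
      measurable_const measurable_const
  have hSabs : ∀ p, |S p| = 1 := by
    intro p; rw [hS]; dsimp only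
    split <;> simp
  have hBmeas : ∀ i, Measurable (B i) := by
    intro i; fun_prop
  have hfst : ∀ i, Integrable (fun p : (Fin d → ℝ) × (Fin d → ℝ) => p.1 i) M := by
    intro i
    have := (P1 i).1.mul_prod (integrable_const (1:ℝ)) (ν := Pm)
    exact this.congr (ae_of_all _ fun p => by simp)
  have hsnd : ∀ i, Integrable (fun p : (Fin d → ℝ) × (Fin d → ℝ) => p.2 i) M := by
    intro i
    have := (integrable_const (1:ℝ)).mul_prod (P1 i).1 (μ := Pm)
    exact this.congr (ae_of_all _ fun p => by simp)
  have hBint : ∀ i, Integrable (B i) M := fun i => (hfst i).sub (hsnd i)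
  have hSBint : ∀ i, Integrable (fun p => S p * B i p) M := by
    intro i
    apply Integrable.mono' (hBint i).abs
    · exact (hSmeas.mul (hBmeas i)).aestronglyMeasurable
    · exact ae_of_all _ fun p => by
        rw [Real.norm_eq_abs, abs_mul, hSabs p, one_mul]
  set v : Fin d → ℝ := fun i => ∫ p, S p * B i p ∂M with hv
  set Z : (Fin d → ℝ) × (Fin d → ℝ) → ℝ := fun p => ∑ i, v i * B i p with hZ
  set t : ℝ := ∑ i, v i ^ 2 with ht
  have htnn : 0 ≤ t := Finset.sum_nonneg fun i _ => sq_nonneg _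
  have hZint : Integrable Z M :=
    integrable_finset_sum _ fun i _ => (hBint i).const_mul (v i)
  have hSZint : Integrable (fun p => S p * Z p) M := by
    have : (fun p => S p * Z p) = fun p => ∑ i, v i * (S p * B i p) := by
      funext p; rw [hZ]; dsimp only; rw [Finset.mul_sum]
      exact Finset.sum_congr rfl fun i _ => by ring
    rw [this]
    exact integrable_finset_sum _ fun i _ => (hSBint i).const_mul (v i)
  have h_t : ∫ p, S p * Z p ∂M = t := by
    have h1 : (fun p => S p * Z p) = fun p => ∑ i, v i * (S p * B i p) := by
      funext p; rw [hZ]; dsimp only; rw [Finset.mul_sum]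
      exact Finset.sum_congr rfl fun i _ => by ring
    rw [h1, integral_finset_sum _ fun i _ => (hSBint i).const_mul (v i)]
    rw [ht]
    refine Finset.sum_congr rfl fun i _ => ?_
    rw [integral_const_mul]
    have hvi : v i = ∫ p, S p * B i p ∂M := rfl
    rw [← hvi, sq]
  have h_le1 : ∫ p, S p * Z p ∂M ≤ ∫ p, |Z p| ∂M := by
    apply integral_mono hSZint hZint.abs
    intro p
    calc S p * Z p ≤ |S p * Z p| := le_abs_self _
      _ = |Z p| := by rw [abs_mul, hSabs p, one_mul]
  have hZsq_eq : (fun p => Z p ^ 2)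
      = fun p => ∑ i, ∑ j, (v i * v j) * (B i p * B j p) := by
    funext p; rw [hZ]; dsimp only
    rw [sq, Finset.sum_mul_sum]
    exact Finset.sum_congr rfl fun i _ => Finset.sum_congr rfl fun j _ => by ring
  have hZsqint : Integrable (fun p => Z p ^ 2) M := by
    rw [hZsq_eq]
    exact integrable_finset_sum _ fun i _ =>
      integrable_finset_sum _ fun j _ => ((Q i j).1).const_mul _
  have h_int_Z2 : ∫ p, Z p ^ 2 ∂M = 2 * (m2v - mu1 ^ 2) * t := by
    rw [hZsq_eq, integral_finset_sum _ fun i _ =>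
      integrable_finset_sum _ fun j _ => ((Q i j).1).const_mul _]
    have : ∀ i : Fin d, ∫ p, ∑ j, (v i * v j) * (B i p * B j p) ∂M
        = v i ^ 2 * (2 * (m2v - mu1 ^ 2)) := by
      intro i
      rw [integral_finset_sum _ fun j _ => ((Q i j).1).const_mul _]
      have : ∀ j : Fin d, ∫ p, (v i * v j) * (B i p * B j p) ∂M
          = (v i * v j) * (if i = j then 2 * (m2v - mu1^2) else 0) := by
        intro j; rw [integral_const_mul, (Q i j).2]
      rw [Finset.sum_congr rfl fun j _ => this j]
      simp only [mul_ite, mul_zero]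
      rw [Finset.sum_ite_eq (Finset.univ : Finset (Fin d)) i
        (fun j => v i * v j * (2 * (m2v - mu1^2)))]
      simp only [Finset.mem_univ, if_true]
      ring
    rw [Finset.sum_congr rfl fun i _ => this i, ← Finset.sum_mul, ← ht]
    ring
  have h_cs : (∫ p, |Z p| ∂M) ^ 2 ≤ ∫ p, Z p ^ 2 ∂M := by
    have habs_sq : Integrable (fun p => |Z p| ^ 2) M :=
      hZsqint.congr (ae_of_all _ fun p => (sq_abs (Z p)).symm)
    have hmem : MemLp (fun p => |Z p|) 2 M := by
      rw [memLp_two_iff_integrable_sq hZint.abs.aestronglyMeasurable]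
      exact habs_sq
    have hvar := variance_nonneg (fun p => |Z p|) M
    rw [variance_eq_sub hmem] at hvar
    have : ∫ p, |Z p| ^ 2 ∂M = ∫ p, Z p ^ 2 ∂M :=
      integral_congr_ae (ae_of_all _ fun p => sq_abs (Z p))
    calc (∫ p, |Z p| ∂M)^2 ≤ ∫ p, |Z p| ^ 2 ∂M := by
          have := hvar; simp only [_root_.Pi.pow_apply] at this; linarith
      _ = ∫ p, Z p ^ 2 ∂M := this
  -- main chain
  have hchain : t * t ≤ 2 * (m2v - mu1 ^ 2) * t := by
    calc t * t ≤ (∫ p, |Z p| ∂M) * (∫ p, |Z p| ∂M) := by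
          apply mul_self_le_mul_self htnn
          rw [← h_t]; exact h_le1
      _ = (∫ p, |Z p| ∂M) ^ 2 := (sq _).symm
      _ ≤ ∫ p, Z p ^ 2 ∂M := h_cs
      _ = 2 * (m2v - mu1 ^ 2) * t := h_int_Z2
  show t ≤ 32 / Real.pi
  have h8 : (8:ℝ) ≤ 32 / Real.pi := by
    rw [le_div_iff₀ Real.pi_pos]
    nlinarith [Real.pi_le_four]
  rcases eq_or_lt_of_le htnn with h0 | h0
  · rw [← h0]; linarith
  · have hle : t ≤ 2 * (m2v - mu1 ^ 2) := le_of_mul_le_mul_right hchain h0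
    have : m2v ≤ 4 := gauss_sq_le
    nlinarith [sq_nonneg mu1]
end

section
/- Let f: R^d → R be L-smooth (‖∇²f‖ ≤ L everywhere) and bounded below by f*. Suppose at each iteration t a stochastic direction g_t satisfies E[⟨∇f(x_{t-1}), g_t⟩ | x_{t-1}] ≥ ‖∇f(x_{t-1})‖ - CμL and E[‖g_t‖² | x_{t-1}] ≤ V, and x_t = x_{t-1} - η g_t with η > 0. Then after T iterations, E[min_{1≤t≤T} ‖∇f(x_{t-1})‖] ≤ (f(x_0) - f*)/(ηT) + CμL + ηLV/2. -/
open MeasureTheory Finset RealInnerProductSpace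

section Aux

variable {E : Type*} [NormedAddCommGroup E] [InnerProductSpace ℝ E] [CompleteSpace E]

lemma inner_gradient_eq (f : E → ℝ) (x v : E) : ⟪gradient f x, v⟫ = fderiv ℝ f x v := by
  simp [gradient, ← InnerProductSpace.toDual_apply_apply]

lemma grad_lipschitz {f : E → ℝ} {L : ℝ} (hf : ContDiff ℝ 2 f)
    (hL : ∀ y, ‖fderiv ℝ (fderiv ℝ f) y‖ ≤ L) (a b : E) :
    ‖gradient f a - gradient f b‖ ≤ L * ‖a - b‖ := by
  have hL0 : 0 ≤ L := le_trans (ContinuousLinearMap.opNorm_nonneg _) (hL 0)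
  have hdf2 : Differentiable ℝ (fderiv ℝ f) :=
    (hf.fderiv_right (m := 1) (by norm_num)).differentiable (by norm_num)
  have hLip : LipschitzWith L.toNNReal (fderiv ℝ f) := by
    apply lipschitzWith_of_nnnorm_fderiv_le hdf2
    intro y
    rw [← NNReal.coe_le_coe, coe_nnnorm, Real.coe_toNNReal _ hL0]
    exact hL y
  have h1 : ‖gradient f a - gradient f b‖ = ‖fderiv ℝ f a - fderiv ℝ f b‖ := by
    rw [gradient, gradient, ← map_sub, LinearIsometryEquiv.norm_map]
  have := hLip.dist_le_mul a b
  rw [dist_eq_norm, dist_eq_norm, Real.coe_toNNReal _ hL0] at this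
  linarith [h1 ▸ this]

lemma descent_lemma {f : E → ℝ} {L : ℝ} (hf : ContDiff ℝ 2 f)
    (hL : ∀ y, ‖fderiv ℝ (fderiv ℝ f) y‖ ≤ L) (x v : E) :
    f (x + v) ≤ f x + fderiv ℝ f x v + L / 2 * ‖v‖ ^ 2 := by
  have hL0 : 0 ≤ L := le_trans (ContinuousLinearMap.opNorm_nonneg _) (hL 0)
  have hdf : Differentiable ℝ f := hf.differentiable (by norm_num)
  have hLipR : ∀ a b : E, ‖fderiv ℝ f a - fderiv ℝ f b‖ ≤ L * ‖a - b‖ := by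
    intro a b
    have h1 := grad_lipschitz hf hL a b
    rw [gradient, gradient, ← map_sub, LinearIsometryEquiv.norm_map] at h1
    exact h1
  set φ : ℝ → ℝ := fun s => f (x + s • v) with hφ
  have hline : ∀ s : ℝ, HasDerivAt (fun s : ℝ => x + s • v) v s := by
    intro s
    simpa using ((hasDerivAt_id s).smul_const v).const_add x
  have hφ' : ∀ s : ℝ, HasDerivAt φ (fderiv ℝ f (x + s • v) v) s := by
    intro s
    exact (hdf (x + s • v)).hasFDerivAt.comp_hasDerivAt s (hline s)
  set h : ℝ → ℝ := fun s => φ s - s * fderiv ℝ f x v - L / 2 * ‖v‖ ^ 2 * s ^ 2 with hh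
  have hh' : ∀ s : ℝ, HasDerivAt h
      (fderiv ℝ f (x + s • v) v - fderiv ℝ f x v - L * ‖v‖ ^ 2 * s) s := by
    intro s
    have h1 : HasDerivAt (fun s : ℝ => s * fderiv ℝ f x v) (fderiv ℝ f x v) s := by
      simpa using (hasDerivAt_id s).mul_const (fderiv ℝ f x v)
    have h2 : HasDerivAt (fun s : ℝ => L / 2 * ‖v‖ ^ 2 * s ^ 2) (L * ‖v‖ ^ 2 * s) s := by
      have := ((hasDerivAt_pow 2 s).const_mul (L / 2 * ‖v‖ ^ 2))
      rw [show L * ‖v‖ ^ 2 * s = L / 2 * ‖v‖ ^ 2 * (((2 : ℕ) : ℝ) * s ^ (2 - 1)) by ring]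
      exact this
    exact ((hφ' s).sub h1).sub h2
  have hanti : AntitoneOn h (Set.Icc 0 1) := by
    apply antitoneOn_of_deriv_nonpos (convex_Icc 0 1)
    · exact Continuous.continuousOn (by
        apply Continuous.sub
        apply Continuous.sub
        · exact hf.continuous.comp (by continuity)
        · continuity
        · continuity)
    · intro s _
      exact ((hh' s).differentiableAt).differentiableWithinAt
    · intro s hs
      rw [interior_Icc] at hs
      rw [(hh' s).deriv]
      have hbd : fderiv ℝ f (x + s • v) v - fderiv ℝ f x v ≤ L * ‖v‖ ^ 2 * s := by
        have h1 : fderiv ℝ f (x + s • v) v - fderiv ℝ f x v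
            = (fderiv ℝ f (x + s • v) - fderiv ℝ f x) v := by simp
        have h2 : ‖(fderiv ℝ f (x + s • v) - fderiv ℝ f x) v‖
            ≤ ‖fderiv ℝ f (x + s • v) - fderiv ℝ f x‖ * ‖v‖ :=
          ContinuousLinearMap.le_opNorm _ v
        have h3 : ‖fderiv ℝ f (x + s • v) - fderiv ℝ f x‖ ≤ L * (s * ‖v‖) := by
          have := hLipR (x + s • v) x
          simpa [norm_smul, abs_of_pos hs.1] using this
        calc fderiv ℝ f (x + s • v) v - fderiv ℝ f x v
            ≤ ‖(fderiv ℝ f (x + s • v) - fderiv ℝ f x) v‖ := by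
              rw [← h1]; exact le_abs_self _
          _ ≤ L * (s * ‖v‖) * ‖v‖ := le_trans h2 (by
              apply mul_le_mul_of_nonneg_right h3 (norm_nonneg v))
          _ = L * ‖v‖ ^ 2 * s := by ring
      linarith
  have h10 : h 1 ≤ h 0 := hanti (by norm_num) (by norm_num) (by norm_num)
  simp only [hh, hφ] at h10
  norm_num at h10
  linarith

lemma measurable_finset_inf' {Ω : Type*} [MeasurableSpace Ω] {s : Finset ℕ} (hs : s.Nonempty)
    {F : ℕ → Ω → ℝ} (hF : ∀ t, Measurable (F t)) :
    Measurable (fun ω => s.inf' hs (fun t => F t ω)) := by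
  induction hs using Finset.Nonempty.cons_induction with
  | singleton a => simpa using hF a
  | cons a s ha hs ih =>
      have he : (fun ω => (Finset.cons a s ha).inf' (Finset.cons_nonempty ha) (fun t => F t ω))
          = fun ω => min (F a ω) (s.inf' hs (fun t => F t ω)) := by
        funext ω
        rw [Finset.inf'_cons]
      rw [he]
      exact (hF a).min ih

end Aux

/-- Convergence of rank-based SGD: if `f` is `L`-smooth (twice continuously
differentiable with `‖∇²f‖ ≤ L`) and bounded below by `fstar`, and the stochastic
directions `g_t` satisfy `E[⟨∇f(x_{t-1}), g_t⟩ | x_{t-1}] ≥ ‖∇f(x_{t-1})‖ - CμL`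
and `E[‖g_t‖² | x_{t-1}] ≤ V`, with iterates `x_t = x_{t-1} - η g_t`, then
`E[min_{1≤t≤T} ‖∇f(x_{t-1})‖] ≤ (f(x₀) - fstar)/(ηT) + CμL + ηLV/2`. -/
theorem rank_sgd_convergence {d : ℕ} {Ω : Type*} [MeasurableSpace Ω]
    (P : Measure Ω) [IsProbabilityMeasure P]
    (f : EuclideanSpace ℝ (Fin d) → ℝ) (L fstar C V η μ : ℝ)
    (hf : ContDiff ℝ 2 f)
    (hL : ∀ y, ‖fderiv ℝ (fderiv ℝ f) y‖ ≤ L)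
    (hbdd : ∀ y, fstar ≤ f y)
    (hη : 0 < η) (hμ : 0 < μ) (hC : 0 ≤ C) (hV : 0 ≤ V)
    (T : ℕ) (hT : 1 ≤ T)
    (x g : ℕ → Ω → EuclideanSpace ℝ (Fin d))
    (x0 : EuclideanSpace ℝ (Fin d)) (hx0 : ∀ ω, x 0 ω = x0)
    (hupd : ∀ t ω, x (t + 1) ω = x t ω - η • g (t + 1) ω)
    (hxmeas : ∀ t, Measurable (x t)) (hgmeas : ∀ t, Measurable (g t))
    (hgint : ∀ t, Integrable (fun ω => ‖g t ω‖ ^ 2) P)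
    (hgrad : ∀ t, ∀ᵐ ω ∂P,
      ‖gradient f (x t ω)‖ - C * μ * L ≤
        (P[fun ω => ⟪gradient f (x t ω), g (t + 1) ω⟫ |
            MeasurableSpace.comap (x t) inferInstance]) ω)
    (hvar : ∀ t, ∀ᵐ ω ∂P,
      (P[fun ω => ‖g (t + 1) ω‖ ^ 2 |
          MeasurableSpace.comap (x t) inferInstance]) ω ≤ V) :
    (∫ ω, (Finset.range T).inf'
        (Finset.nonempty_range_iff.mpr (by omega))
        (fun t => ‖gradient f (x t ω)‖) ∂P)
      ≤ (f x0 - fstar) / (η * T) + C * μ * L + η * L * V / 2 := by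
  have hL0 : 0 ≤ L := le_trans (ContinuousLinearMap.opNorm_nonneg _) (hL 0)
  set N : ℕ → Ω → ℝ := fun t ω => ‖gradient f (x t ω)‖ with hN
  set I : ℕ → Ω → ℝ := fun t ω => ⟪gradient f (x t ω), g (t + 1) ω⟫ with hI
  set F : ℕ → Ω → ℝ := fun t ω => f (x t ω) with hF
  have hgradc : Continuous (gradient f) := by
    have : Continuous (fderiv ℝ f) := hf.continuous_fderiv (by norm_num)
    exact (LinearIsometryEquiv.continuous _).comp this
  have hNmeas : ∀ t, Measurable (N t) := fun t =>
    ((hgradc.measurable.comp (hxmeas t)).norm)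
  have hImeas : ∀ t, Measurable (I t) := fun t =>
    (hgradc.measurable.comp (hxmeas t)).inner (hgmeas (t + 1))
  have hFmeas : ∀ t, Measurable (F t) := fun t =>
    hf.continuous.measurable.comp (hxmeas t)
  -- integrability of ‖g t‖
  have hgn : ∀ t, Integrable (fun ω => ‖g t ω‖) P := by
    intro t
    apply Integrable.mono'
      (((hgint t).add (integrable_const 1)) : Integrable (fun ω => ‖g t ω‖ ^ 2 + 1) P)
      ((hgmeas t).norm.aestronglyMeasurable)
    filter_upwards with ω
    simp only [Pi.add_apply]
    rw [Real.norm_eq_abs, abs_of_nonneg (norm_nonneg _)]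
    nlinarith [norm_nonneg (g t ω)]
  -- integrability of products
  have hprod : ∀ s t, Integrable (fun ω => ‖g s ω‖ * ‖g t ω‖) P := by
    intro s t
    apply Integrable.mono'
      (((hgint s).add (hgint t)) : Integrable (fun ω => ‖g s ω‖ ^ 2 + ‖g t ω‖ ^ 2) P)
      (((hgmeas s).norm.mul (hgmeas t).norm).aestronglyMeasurable)
    filter_upwards with ω
    simp only [Pi.add_apply, Pi.mul_apply]
    rw [Real.norm_eq_abs, abs_of_nonneg (by positivity)]
    nlinarith [norm_nonneg (g s ω), norm_nonneg (g t ω)]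
  -- distance bound
  have hxd : ∀ t ω, ‖x t ω - x0‖ ≤ η * ∑ s ∈ Finset.range t, ‖g (s + 1) ω‖ := by
    intro t ω
    induction t with
    | zero => simp [hx0]
    | succ t ih =>
        have hrw : x (t + 1) ω - x0 = (x t ω - x0) - η • g (t + 1) ω := by
          rw [hupd]; abel
        calc ‖x (t + 1) ω - x0‖ ≤ ‖x t ω - x0‖ + ‖η • g (t + 1) ω‖ := by
              rw [hrw]; exact norm_sub_le _ _
          _ ≤ η * ∑ s ∈ Finset.range t, ‖g (s + 1) ω‖ + η * ‖g (t + 1) ω‖ := by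
              rw [norm_smul, Real.norm_eq_abs, abs_of_pos hη]
              linarith
          _ = η * ∑ s ∈ Finset.range (t + 1), ‖g (s + 1) ω‖ := by
              rw [Finset.sum_range_succ]; ring
  -- gradient norm bound
  set A : ℕ → Ω → ℝ := fun t ω =>
    ‖gradient f x0‖ + L * (η * ∑ s ∈ Finset.range t, ‖g (s + 1) ω‖) with hA
  have hAint : ∀ t, Integrable (A t) P := by
    intro t
    apply (integrable_const _).add
    apply Integrable.const_mul
    apply Integrable.const_mul
    exact integrable_finset_sum _ (fun s _ => hgn (s + 1))
  have hNleA : ∀ t ω, N t ω ≤ A t ω := by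
    intro t ω
    have h1 : ‖gradient f (x t ω)‖ ≤ ‖gradient f x0‖ + ‖gradient f (x t ω) - gradient f x0‖ := by
      calc ‖gradient f (x t ω)‖
          = ‖gradient f x0 + (gradient f (x t ω) - gradient f x0)‖ := by
            congr 1; abel
        _ ≤ ‖gradient f x0‖ + ‖gradient f (x t ω) - gradient f x0‖ := norm_add_le _ _
    have h2 : ‖gradient f (x t ω) - gradient f x0‖ ≤ L * ‖x t ω - x0‖ :=
      grad_lipschitz hf hL _ _
    have h3 := hxd t ω
    have h4 : L * ‖x t ω - x0‖ ≤ L * (η * ∑ s ∈ Finset.range t, ‖g (s + 1) ω‖) :=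
      mul_le_mul_of_nonneg_left h3 hL0
    simp only [hN, hA]
    linarith
  have hNnn : ∀ t ω, 0 ≤ N t ω := fun t ω => norm_nonneg _
  have hNint : ∀ t, Integrable (N t) P := by
    intro t
    apply Integrable.mono' (hAint t) (hNmeas t).aestronglyMeasurable
    filter_upwards with ω
    rw [Real.norm_eq_abs, abs_of_nonneg (hNnn t ω)]
    exact hNleA t ω
  have hIint : ∀ t, Integrable (I t) P := by
    intro t
    have hbint : Integrable (fun ω => ‖gradient f x0‖ * ‖g (t + 1) ω‖
        + L * η * ∑ s ∈ Finset.range t, (‖g (s + 1) ω‖ * ‖g (t + 1) ω‖)) P := by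
      apply ((hgn (t + 1)).const_mul _).add
      apply Integrable.const_mul
      exact integrable_finset_sum _ (fun s _ => hprod (s + 1) (t + 1))
    apply Integrable.mono' hbint (hImeas t).aestronglyMeasurable
    filter_upwards with ω
    have h1 : ‖I t ω‖ ≤ N t ω * ‖g (t + 1) ω‖ := by
      simpa [hN, hI] using abs_real_inner_le_norm (gradient f (x t ω)) (g (t + 1) ω)
    have h2 : N t ω * ‖g (t + 1) ω‖ ≤ A t ω * ‖g (t + 1) ω‖ :=
      mul_le_mul_of_nonneg_right (hNleA t ω) (norm_nonneg _)
    have h3 : A t ω * ‖g (t + 1) ω‖ = ‖gradient f x0‖ * ‖g (t + 1) ω‖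
        + L * η * ∑ s ∈ Finset.range t, (‖g (s + 1) ω‖ * ‖g (t + 1) ω‖) := by
      simp only [hA]
      rw [← Finset.sum_mul]
      ring
    rw [h3] at h2
    linarith
  -- pointwise descent
  have hdesc : ∀ t ω, F (t + 1) ω ≤ F t ω - η * I t ω + η ^ 2 * L / 2 * ‖g (t + 1) ω‖ ^ 2 := by
    intro t ω
    have h0 := descent_lemma hf hL (x t ω) (-(η • g (t + 1) ω))
    have hx1 : x t ω + -(η • g (t + 1) ω) = x (t + 1) ω := by
      rw [hupd]; abel
    have hd : fderiv ℝ f (x t ω) (-(η • g (t + 1) ω)) = -(η * I t ω) := by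
      rw [(fderiv ℝ f (x t ω)).map_neg, (fderiv ℝ f (x t ω)).map_smul]
      simp only [hI, inner_gradient_eq, smul_eq_mul]
    have hnv : ‖-(η • g (t + 1) ω)‖ ^ 2 = η ^ 2 * ‖g (t + 1) ω‖ ^ 2 := by
      rw [norm_neg, norm_smul, Real.norm_eq_abs, mul_pow, sq_abs]
    rw [hx1, hd, hnv] at h0
    simp only [hF]
    nlinarith [h0]
  -- integrability of F t
  have hFint : ∀ t, Integrable (F t) P := by
    intro t
    induction t with
    | zero =>
        have : F 0 = fun _ => f x0 := funext fun ω => by simp [hF, hx0]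
        rw [this]; exact integrable_const _
    | succ t ih =>
        have hU : Integrable (fun ω => F t ω - η * I t ω
            + η ^ 2 * L / 2 * ‖g (t + 1) ω‖ ^ 2) P :=
          (ih.sub ((hIint t).const_mul η)).add ((hgint (t + 1)).const_mul _)
        apply Integrable.mono'
          ((hU.abs.add (integrable_const |fstar|)) : Integrable (fun ω =>
            |F t ω - η * I t ω + η ^ 2 * L / 2 * ‖g (t + 1) ω‖ ^ 2| + |fstar|) P)
          (hFmeas (t + 1)).aestronglyMeasurable
        filter_upwards with ω
        simp only [Pi.add_apply]
        rw [Real.norm_eq_abs, abs_le]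
        constructor
        · have h1 : fstar ≤ F (t + 1) ω := hbdd (x (t + 1) ω)
          have h2 : -|fstar| ≤ fstar := neg_abs_le fstar
          have h3 : (0:ℝ) ≤ |F t ω - η * I t ω + η ^ 2 * L / 2 * ‖g (t + 1) ω‖ ^ 2| :=
            abs_nonneg _
          linarith
        · have h1 := hdesc t ω
          have h2 : F t ω - η * I t ω + η ^ 2 * L / 2 * ‖g (t + 1) ω‖ ^ 2
              ≤ |F t ω - η * I t ω + η ^ 2 * L / 2 * ‖g (t + 1) ω‖ ^ 2| := le_abs_self _
          have h3 : (0:ℝ) ≤ |fstar| := abs_nonneg _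
          linarith
  -- per-step expectation inequality
  set B : ℝ := η * (C * μ * L) + η ^ 2 * L * V / 2 with hB
  have hstep : ∀ t, ∫ ω, F (t + 1) ω ∂P ≤ ∫ ω, F t ω ∂P - η * ∫ ω, N t ω ∂P + B := by
    intro t
    have hm : MeasurableSpace.comap (x t) inferInstance ≤ ‹MeasurableSpace Ω› :=
      (hxmeas t).comap_le
    have hIge : ∫ ω, N t ω ∂P - C * μ * L ≤ ∫ ω, I t ω ∂P := by
      have e1 : ∫ ω, I t ω ∂P = ∫ ω, (P[I t | MeasurableSpace.comap (x t) inferInstance]) ω ∂P :=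
        (integral_condExp hm).symm
      have e2 : ∫ ω, (N t ω - C * μ * L) ∂P
          ≤ ∫ ω, (P[I t | MeasurableSpace.comap (x t) inferInstance]) ω ∂P := by
        apply integral_mono_ae ((hNint t).sub (integrable_const _)) integrable_condExp
        exact hgrad t
      have e3 : ∫ ω, (N t ω - C * μ * L) ∂P = ∫ ω, N t ω ∂P - C * μ * L := by
        rw [integral_sub (hNint t) (integrable_const _), integral_const]
        simp
      rw [e1]; rw [e3] at e2; exact e2
    have hgb : ∫ ω, ‖g (t + 1) ω‖ ^ 2 ∂P ≤ V := by
      have e1 : ∫ ω, ‖g (t + 1) ω‖ ^ 2 ∂P = ∫ ω,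
          (P[fun ω => ‖g (t + 1) ω‖ ^ 2 | MeasurableSpace.comap (x t) inferInstance]) ω ∂P :=
        (integral_condExp hm).symm
      have e2 : ∫ ω,
          (P[fun ω => ‖g (t + 1) ω‖ ^ 2 | MeasurableSpace.comap (x t) inferInstance]) ω ∂P
          ≤ ∫ _ω, V ∂P := by
        apply integral_mono_ae integrable_condExp (integrable_const _)
        exact hvar t
      rw [e1]
      simpa using e2
    have hmono : ∫ ω, F (t + 1) ω ∂P ≤ ∫ ω, (F t ω - η * I t ω
        + η ^ 2 * L / 2 * ‖g (t + 1) ω‖ ^ 2) ∂P := by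
      apply integral_mono (hFint (t + 1))
        (((hFint t).sub ((hIint t).const_mul η)).add ((hgint (t + 1)).const_mul _))
      exact fun ω => hdesc t ω
    have hsplit : ∫ ω, (F t ω - η * I t ω + η ^ 2 * L / 2 * ‖g (t + 1) ω‖ ^ 2) ∂P
        = ∫ ω, F t ω ∂P - η * ∫ ω, I t ω ∂P + η ^ 2 * L / 2 * ∫ ω, ‖g (t + 1) ω‖ ^ 2 ∂P := by
      have i1 : Integrable (fun ω => F t ω - η * I t ω) P :=
        (hFint t).sub ((hIint t).const_mul η)
      have i2 : Integrable (fun ω => η ^ 2 * L / 2 * ‖g (t + 1) ω‖ ^ 2) P :=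
        (hgint (t + 1)).const_mul _
      rw [integral_add i1 i2,
        integral_sub (hFint t) ((hIint t).const_mul η), integral_const_mul, integral_const_mul]
    have hcoef : (0:ℝ) ≤ η ^ 2 * L / 2 := by positivity
    have h4 : η ^ 2 * L / 2 * ∫ ω, ‖g (t + 1) ω‖ ^ 2 ∂P ≤ η ^ 2 * L / 2 * V :=
      mul_le_mul_of_nonneg_left hgb hcoef
    have h5 : η * (∫ ω, N t ω ∂P - C * μ * L) ≤ η * ∫ ω, I t ω ∂P :=
      mul_le_mul_of_nonneg_left hIge (le_of_lt hη)
    rw [hsplit] at hmono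
    simp only [hB]
    nlinarith [hmono]
  -- telescoping
  have htel : ∀ n, ∫ ω, F n ω ∂P + η * ∑ t ∈ Finset.range n, ∫ ω, N t ω ∂P
      ≤ f x0 + n * B := by
    intro n
    induction n with
    | zero =>
        have : F 0 = fun _ => f x0 := funext fun ω => by simp [hF, hx0]
        rw [this]
        simp
    | succ n ih =>
        have h1 := hstep n
        rw [Finset.sum_range_succ]
        push_cast
        linarith
  have hfs : fstar ≤ ∫ ω, F T ω ∂P := by
    have : fstar = ∫ _ω, fstar ∂P := by simp
    rw [this]
    exact integral_mono (integrable_const _) (hFint T) (fun ω => hbdd _)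
  have hsum : η * ∑ t ∈ Finset.range T, ∫ ω, N t ω ∂P ≤ f x0 - fstar + T * B := by
    have := htel T
    linarith
  -- the min
  set M : Ω → ℝ := fun ω => (Finset.range T).inf'
      (Finset.nonempty_range_iff.mpr (by omega)) (fun t => ‖gradient f (x t ω)‖) with hM
  have hMmeas : Measurable M :=
    measurable_finset_inf' _ (fun t => hNmeas t)
  have hMle : ∀ t ∈ Finset.range T, ∀ ω, M ω ≤ N t ω := by
    intro t ht ω
    exact Finset.inf'_le _ ht
  have hMnn : ∀ ω, 0 ≤ M ω := by
    intro ω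
    apply Finset.le_inf'
    intro t _
    exact norm_nonneg _
  have h0T : (0 : ℕ) ∈ Finset.range T := Finset.mem_range.mpr (by omega)
  have hMint : Integrable M P := by
    apply Integrable.mono' (hNint 0) hMmeas.aestronglyMeasurable
    filter_upwards with ω
    rw [Real.norm_eq_abs, abs_of_nonneg (hMnn ω)]
    exact hMle 0 h0T ω
  have hMt : ∀ t ∈ Finset.range T, ∫ ω, M ω ∂P ≤ ∫ ω, N t ω ∂P := by
    intro t ht
    exact integral_mono hMint (hNint t) (fun ω => hMle t ht ω)
  have hTsum : (T : ℝ) * ∫ ω, M ω ∂P ≤ ∑ t ∈ Finset.range T, ∫ ω, N t ω ∂P := by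
    calc (T : ℝ) * ∫ ω, M ω ∂P = ∑ _t ∈ Finset.range T, ∫ ω, M ω ∂P := by
          rw [Finset.sum_const, Finset.card_range]; ring
      _ ≤ ∑ t ∈ Finset.range T, ∫ ω, N t ω ∂P := Finset.sum_le_sum hMt
  have hT0 : (0:ℝ) < (T:ℝ) := by
    exact_mod_cast Nat.pos_of_ne_zero (by omega)
  have hηT : (0:ℝ) < η * T := mul_pos hη hT0
  have hfin : ∫ ω, M ω ∂P ≤ (f x0 - fstar + T * B) / (η * T) := by
    rw [le_div_iff₀ hηT]
    nlinarith [hsum, hTsum, mul_le_mul_of_nonneg_left hTsum (le_of_lt hη)]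
  have heq : (f x0 - fstar + T * B) / (η * T)
      = (f x0 - fstar) / (η * T) + C * μ * L + η * L * V / 2 := by
    have h1 : (T:ℝ) * B = (η * T) * (C * μ * L + η * L * V / 2) := by rw [hB]; ring
    rw [add_div, h1, mul_div_cancel_left₀ _ (ne_of_gt hηT), ← add_assoc]
  rw [heq] at hfin
  exact hfin
end

section
/- Let f be an L-smooth function on R^d, x ∈ R^d, μ > 0, ξ1, ξ2 ∈ R^d. If ⟨∇f(x), ξ1 - ξ2⟩ > (μL/2)(‖ξ1‖² + ‖ξ2‖²), then f(x + μξ1) > f(x + μξ2), i.e., sign(f(x+μξ1) - f(x+μξ2)) = sign(⟨∇f(x), ξ1 - ξ2⟩) = 1. -/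
open RealInnerProductSpace Set

lemma taylor_quad_bound {E : Type*} [NormedAddCommGroup E] [InnerProductSpace ℝ E]
    (f : E → ℝ) (L : ℝ) (hf : ContDiff ℝ 2 f)
    (hL : ∀ y, ‖fderiv ℝ (fderiv ℝ f) y‖ ≤ L) (x v : E) :
    |f (x + v) - f x - fderiv ℝ f x v| ≤ L / 2 * ‖v‖ ^ 2 := by
  have hdf : Differentiable ℝ f := hf.differentiable (by norm_num)
  have hdf' : Differentiable ℝ (fderiv ℝ f) :=
    (hf.fderiv_right (m := 1) le_rfl).differentiable (by norm_num)
  have hlip : ∀ y z : E, ‖fderiv ℝ f y - fderiv ℝ f z‖ ≤ L * ‖y - z‖ := by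
    intro y z
    exact (convex_univ).norm_image_sub_le_of_norm_fderiv_le
      (fun w _ => hdf' w) (fun w _ => hL w) trivial trivial
  have hL0 : 0 ≤ L := (norm_nonneg (fderiv ℝ (fderiv ℝ f) x)).trans (hL x)
  set K := L * ‖v‖ ^ 2 with hK
  set F : ℝ → ℝ := fun t => f (x + t • v) - f x - t * fderiv ℝ f x v with hF
  have hF' : ∀ t : ℝ, HasDerivAt F (fderiv ℝ f (x + t • v) v - fderiv ℝ f x v) t := by
    intro t
    have h1 : HasDerivAt (fun t : ℝ => x + t • v) v t := by
      simpa using ((hasDerivAt_id t).smul_const v).const_add x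
    have h2 : HasDerivAt (fun t : ℝ => f (x + t • v)) (fderiv ℝ f (x + t • v) v) t :=
      (hdf (x + t • v)).hasFDerivAt.comp_hasDerivAt t h1
    exact (h2.sub_const (f x)).sub (hasDerivAt_mul_const (fderiv ℝ f x v))
  have hcont : ContinuousOn F (Icc (0:ℝ) 1) :=
    fun t _ => (hF' t).continuousAt.continuousWithinAt
  have hderiv : ∀ t ∈ Ico (0:ℝ) 1,
      HasDerivWithinAt F (fderiv ℝ f (x + t • v) v - fderiv ℝ f x v) (Ici t) t :=
    fun t _ => (hF' t).hasDerivWithinAt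
  have ha : ‖F 0‖ ≤ K * (0:ℝ) ^ 2 / 2 := by simp [hF]
  have hB : ∀ t : ℝ, HasDerivAt (fun t : ℝ => K * t ^ 2 / 2) (K * t) t := by
    intro t
    have h2 := ((hasDerivAt_pow 2 t).const_mul K).div_const 2
    norm_num at h2
    exact h2.congr_deriv (by ring)
  have bound : ∀ t ∈ Ico (0:ℝ) 1,
      ‖fderiv ℝ f (x + t • v) v - fderiv ℝ f x v‖ ≤ K * t := by
    intro t ht
    calc ‖fderiv ℝ f (x + t • v) v - fderiv ℝ f x v‖
        = ‖(fderiv ℝ f (x + t • v) - fderiv ℝ f x) v‖ := by simp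
      _ ≤ ‖fderiv ℝ f (x + t • v) - fderiv ℝ f x‖ * ‖v‖ :=
          ContinuousLinearMap.le_opNorm _ _
      _ ≤ (L * ‖(x + t • v) - x‖) * ‖v‖ :=
          mul_le_mul_of_nonneg_right (hlip _ _) (norm_nonneg v)
      _ = K * |t| := by
          rw [add_sub_cancel_left, norm_smul, hK, Real.norm_eq_abs]; ring
      _ = K * t := by rw [abs_of_nonneg ht.1]
  have key := image_norm_le_of_norm_deriv_right_le_deriv_boundary
    hcont hderiv ha hB bound (right_mem_Icc.mpr zero_le_one)
  simpa [hF, Real.norm_eq_abs] using key.trans_eq (by ring)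

/-- For `L`-smooth `f` (twice continuously differentiable with `‖∇²f‖ ≤ L`),
`μ > 0`, and `ξ1, ξ2 ∈ ℝ^d`: if `⟨∇f(x), ξ1-ξ2⟩ > (μL/2)(‖ξ1‖² + ‖ξ2‖²)`, then
`f(x+μξ1) > f(x+μξ2)`, i.e.
`sign(f(x+μξ1) - f(x+μξ2)) = sign(⟨∇f(x), ξ1-ξ2⟩) = 1`. -/
theorem smooth_sign_agreement (d : ℕ) (f : EuclideanSpace ℝ (Fin d) → ℝ)
    (L μ : ℝ) (hf : ContDiff ℝ 2 f)
    (hL : ∀ y, ‖fderiv ℝ (fderiv ℝ f) y‖ ≤ L)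
    (hμ : 0 < μ) (x ξ1 ξ2 : EuclideanSpace ℝ (Fin d))
    (h : μ * L / 2 * (‖ξ1‖ ^ 2 + ‖ξ2‖ ^ 2) < ⟪gradient f x, ξ1 - ξ2⟫) :
    f (x + μ • ξ2) < f (x + μ • ξ1) ∧
    (if 0 ≤ f (x + μ • ξ1) - f (x + μ • ξ2) then (1 : ℝ) else -1)
      = (if 0 ≤ ⟪gradient f x, ξ1 - ξ2⟫ then (1 : ℝ) else -1) ∧
    (if 0 ≤ ⟪gradient f x, ξ1 - ξ2⟫ then (1 : ℝ) else -1) = 1 := by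
  have hdf : Differentiable ℝ f := hf.differentiable (by norm_num)
  have hgrad : ∀ w, ⟪gradient f x, w⟫ = fderiv ℝ f x w := by
    intro w
    have h1 : HasFDerivAt f (InnerProductSpace.toDual ℝ _ (gradient f x)) x :=
      hasGradientAt_iff_hasFDerivAt.mp (hdf x).hasGradientAt
    rw [h1.fderiv]
    simp only [InnerProductSpace.toDual_apply_apply]
  have hL0 : 0 ≤ L := (norm_nonneg (fderiv ℝ (fderiv ℝ f) x)).trans (hL x)
  have t1 := taylor_quad_bound f L hf hL x (μ • ξ1)
  have t2 := taylor_quad_bound f L hf hL x (μ • ξ2)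
  rw [abs_le] at t1 t2
  have hlin : ∀ ξ : EuclideanSpace ℝ (Fin d),
      fderiv ℝ f x (μ • ξ) = μ * fderiv ℝ f x ξ := by
    intro ξ; simp
  have hnorm : ∀ ξ : EuclideanSpace ℝ (Fin d), ‖μ • ξ‖ ^ 2 = μ ^ 2 * ‖ξ‖ ^ 2 := by
    intro ξ; rw [norm_smul, mul_pow, Real.norm_eq_abs, sq_abs]
  rw [hlin, hnorm] at t1 t2
  have hsub : fderiv ℝ f x ξ1 - fderiv ℝ f x ξ2 = ⟪gradient f x, ξ1 - ξ2⟫ := by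
    rw [hgrad]; simp
  have hmain : f (x + μ • ξ2) < f (x + μ • ξ1) := by
    nlinarith [t1.1, t2.2, mul_pos hμ (lt_of_le_of_lt (by positivity) h)]
  have hpos : (0:ℝ) ≤ ⟪gradient f x, ξ1 - ξ2⟫ :=
    le_of_lt (lt_of_le_of_lt (by positivity) h)
  refine ⟨hmain, ?_, ?_⟩
  · rw [if_pos (sub_nonneg.mpr hmain.le), if_pos hpos]
  · rw [if_pos hpos]
end
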